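/- Let X, S, A be finite nonempty sets and let f : X × S → A. Suppose there exist natural numbers k, λ with 1 < k < |X| and λ ≥ 1 such that: (i) for every s ∈ S and α ∈ A, |{x ∈ X : f(x,s) = α}| = k; and (ii) for all distinct x, x' ∈ X and every α ∈ A, |{s ∈ S : f(x,s) = f(x',s) = α}| = λ. Then f is an ε-almost collision-flat universal (ε-ACFU) hash function with the optimal parameter ε = (|X| − |A|)/(|A|(|X| − 1)); moreover k·|A| = |X| and λ·|A| = ε·|S| (as real numbers). -/

import Mathlib

/-!
Fixing a column `s`, the blocks `{x | f (x, s) = α}` partition `X` into `|A|` sets of size `k`,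
so `|X| = k |A|`. Fixing a row `x` and a symbol `α`, double counting the pairs `(x', s)` with
`x' ≠ x` and `f (x, s) = f (x', s) = α` gives the replication identity
`r (k - 1) = λ (|X| - 1)` for `r = |{s | f (x, s) = α}|`. Since `k > 1`, `r` does not depend on
`α`, hence `|A| r = |S|`, which is (ACFU1); the value of `ε` is then pure algebra.
-/

open Finset

theorem Fintype.card_eq_card_mul_of_card_fiber_eq {α β : Type*} [Fintype α] [Fintype β]
    [DecidableEq β] (g : α → β) {k : ℕ} (h : ∀ b, #{a | g a = b} = k) :
    Fintype.card α = Fintype.card β * k := by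
  rw [← card_univ, card_eq_sum_card_fiberwise fun a _ => mem_univ (g a)]
  simp [h]

theorem card_filter_mul_pred_eq_mul_card_pred {X S A : Type*} [Fintype X] [Fintype S]
    [DecidableEq A] (f : X × S → A) {k lam : ℕ} (x : X) (α : A)
    (hblock : ∀ s, f (x, s) = α → #{x' | f (x', s) = α} = k)
    (hpair : ∀ x', x ≠ x' → #{s | f (x, s) = α ∧ f (x', s) = α} = lam) :
    #{s | f (x, s) = α} * (k - 1) = lam * (Fintype.card X - 1) := by
  classical
  have h := card_mul_eq_card_mul (fun x' s => f (x', s) = α)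
    (s := univ.erase x) (t := {s | f (x, s) = α}) (m := lam) (n := k - 1)
    (fun x' hx' => by
      rw [bipartiteAbove, filter_filter]
      exact hpair x' (mem_erase.mp hx').1.symm)
    (fun s hs => by
      rw [bipartiteBelow, filter_erase, card_erase_of_mem (by simpa using hs),
        hblock s (by simpa using hs)])
  rw [card_erase_of_mem (mem_univ x), card_univ] at h
  rw [← h, mul_comm]

theorem mul_eq_div_mul_of_design_counts {v b a k r lam : ℝ} (ha : a ≠ 0) (hv : v ≠ 1)
    (hvk : v = a * k) (hbr : b = a * r) (hrep : r * (k - 1) = lam * (v - 1)) :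
    lam * a = (v - a) / (a * (v - 1)) * b := by
  rw [div_mul_eq_mul_div, eq_div_iff (mul_ne_zero ha (sub_ne_zero.mpr hv)), hbr]
  linear_combination (-a ^ 2) * hrep - a * r * hvk

theorem mosaic_of_bibds_gives_ocfu_general {X S A : Type*} [Fintype X] [Fintype S] [Fintype A]
    [Nonempty S] [Nonempty A] [DecidableEq A]
    (f : X × S → A) (k lam : ℕ) (hk1 : 1 < k)
    (hblocksize : ∀ (s : S) (α : A),
      (Finset.univ.filter fun x : X => f (x, s) = α).card = k)
    (hlambda : ∀ (x x' : X), x ≠ x' → ∀ (α : A),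
      (Finset.univ.filter fun s : S => f (x, s) = α ∧ f (x', s) = α).card = lam) :
    (∀ (x : X) (α : A),
      (Fintype.card A : ℝ) * ((Finset.univ.filter fun s : S => f (x, s) = α).card : ℝ)
        = (Fintype.card S : ℝ)) ∧
    (∀ (x x' : X), x ≠ x' → ∀ (α : A),
      (Fintype.card A : ℝ) *
          ((Finset.univ.filter fun s : S => f (x, s) = α ∧ f (x', s) = α).card : ℝ)
        ≤ (((Fintype.card X : ℝ) - (Fintype.card A : ℝ)) /
            ((Fintype.card A : ℝ) * ((Fintype.card X : ℝ) - 1))) * (Fintype.card S : ℝ)) ∧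
    (k : ℝ) * (Fintype.card A : ℝ) = (Fintype.card X : ℝ) ∧
    (lam : ℝ) * (Fintype.card A : ℝ)
      = (((Fintype.card X : ℝ) - (Fintype.card A : ℝ)) /
          ((Fintype.card A : ℝ) * ((Fintype.card X : ℝ) - 1))) * (Fintype.card S : ℝ) := by
  obtain ⟨s₀⟩ := ‹Nonempty S›
  have hX : Fintype.card X = Fintype.card A * k :=
    Fintype.card_eq_card_mul_of_card_fiber_eq _ (hblocksize s₀)
  have hA : 0 < Fintype.card A := Fintype.card_pos
  have hX1 : 1 < Fintype.card X := hX ▸ hk1.trans_le (Nat.le_mul_of_pos_left k hA)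
  have hrep x α := card_filter_mul_pred_eq_mul_card_pred f x α (fun s _ => hblocksize s α)
    (fun x' hx' => hlambda x x' hx' α)
  have hS x α : Fintype.card S = Fintype.card A * #{s | f (x, s) = α} :=
    Fintype.card_eq_card_mul_of_card_fiber_eq _ fun β =>
      Nat.eq_of_mul_eq_mul_right (Nat.sub_pos_of_lt hk1) ((hrep x β).trans (hrep x α).symm)
  obtain ⟨x₀⟩ := Fintype.card_pos_iff.mp (zero_lt_one.trans hX1)
  obtain ⟨α₀⟩ := ‹Nonempty A›
  have hrepℝ : (#{s | f (x₀, s) = α₀} : ℝ) * ((k : ℝ) - 1)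
      = lam * ((Fintype.card X : ℝ) - 1) := by
    have h := congrArg (Nat.cast : ℕ → ℝ) (hrep x₀ α₀)
    push_cast [Nat.cast_sub hk1.le, Nat.cast_sub hX1.le] at h
    exact h
  have hε := mul_eq_div_mul_of_design_counts (a := Fintype.card A) (b := Fintype.card S)
    (by positivity) (by exact_mod_cast hX1.ne') (by exact_mod_cast hX)
    (by exact_mod_cast hS x₀ α₀) hrepℝ
  refine ⟨fun x α => by exact_mod_cast (hS x α).symm, fun x x' hxx' α => ?_, ?_, hε⟩
  · rw [hlambda x x' hxx' α, ← hε, mul_comm]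
  · exact_mod_cast (hX.trans (mul_comm _ _)).symm

/-- If the mosaic of f is a mosaic of BIBD(|X|, k, λ), then f is
an OCFU hash function, with k·|A| = |X| and λ·|A| = ε·|S|. -/
theorem mosaic_of_bibds_gives_ocfu {X S A : Type*} [Fintype X] [Fintype S] [Fintype A]
    [Nonempty X] [Nonempty S] [Nonempty A] [DecidableEq A]
    (f : X × S → A) (k lam : ℕ) (hk1 : 1 < k) (hkX : k < Fintype.card X) (hlam : 1 ≤ lam)
    (hblocksize : ∀ (s : S) (α : A),
      (Finset.univ.filter fun x : X => f (x, s) = α).card = k)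
    (hlambda : ∀ (x x' : X), x ≠ x' → ∀ (α : A),
      (Finset.univ.filter fun s : S => f (x, s) = α ∧ f (x', s) = α).card = lam) :
    (∀ (x : X) (α : A),
      (Fintype.card A : ℝ) * ((Finset.univ.filter fun s : S => f (x, s) = α).card : ℝ)
        = (Fintype.card S : ℝ)) ∧
    (∀ (x x' : X), x ≠ x' → ∀ (α : A),
      (Fintype.card A : ℝ) *
          ((Finset.univ.filter fun s : S => f (x, s) = α ∧ f (x', s) = α).card : ℝ)
        ≤ (((Fintype.card X : ℝ) - (Fintype.card A : ℝ)) /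
            ((Fintype.card A : ℝ) * ((Fintype.card X : ℝ) - 1))) * (Fintype.card S : ℝ)) ∧
    (k : ℝ) * (Fintype.card A : ℝ) = (Fintype.card X : ℝ) ∧
    (lam : ℝ) * (Fintype.card A : ℝ)
      = (((Fintype.card X : ℝ) - (Fintype.card A : ℝ)) /
          ((Fintype.card A : ℝ) * ((Fintype.card X : ℝ) - 1))) * (Fintype.card S : ℝ) :=
  mosaic_of_bibds_gives_ocfu_general f k lam hk1 hblocksize hlambda
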